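/- Let (X, f) be a dynamical system, where X is a compact uniform space and f : X → X is a continuous surjection. For every entourage E there is an entourage D such that for every thick set T ⊆ ℕ and every sequence (x_i)_{i∈ℕ} which is a D-pseudo orbit on T, there exist a thick set T' ⊆ T and a sequence (y_i)_{i∈ℕ} with all y_i ∈ CR(f) which is an E-pseudo orbit on T' and satisfies (x_i, y_i) ∈ E for every i ∈ T'. -/

import Mathlib

open Filter Set Function

section Defs

variable {X : Type*} [UniformSpace X]

/-- A `D`-chain from `x` to `y`: a finite sequence `x = c 0, c 1, …, c n` (`n ≥ 1`)
with `c n = y` and `(f (c i), c (i+1)) ∈ D` for all `i < n`. -/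
def DChain (f : X → X) (D : Set (X × X)) (x y : X) : Prop :=
  ∃ n : ℕ, 1 ≤ n ∧ ∃ c : ℕ → X, c 0 = x ∧ c n = y ∧ ∀ i < n, (f (c i), c (i + 1)) ∈ D

/-- A `D`-chain from `x` to `y` contained in the set `S`. -/
def DChainIn (f : X → X) (D : Set (X × X)) (S : Set X) (x y : X) : Prop :=
  ∃ n : ℕ, 1 ≤ n ∧ ∃ c : ℕ → X, c 0 = x ∧ c n = y ∧ (∀ i ≤ n, c i ∈ S) ∧
    ∀ i < n, (f (c i), c (i + 1)) ∈ D

/-- The set of chain-recurrent points of `f`. -/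
def CR (f : X → X) : Set X :=
  {x | ∀ D ∈ uniformity X, DChain f D x x}

/-- The set of non-wandering points of `f`. -/
def NonWandering (f : X → X) : Set X :=
  {x | ∀ U : Set X, IsOpen U → x ∈ U → ∃ n : ℕ, 1 ≤ n ∧ (f^[n] '' U ∩ U).Nonempty}

/-- `(x i)` is a `D`-pseudo orbit on the set `A ⊆ ℕ`. -/
def PseudoOrbitOn (f : X → X) (D : Set (X × X)) (x : ℕ → X) (A : Set ℕ) : Prop :=
  ∀ i ∈ A, (f (x i), x (i + 1)) ∈ D

/-- `(x i)` is `E`-traced by `y` on the set `B ⊆ ℕ`. -/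
def TracedOn (f : X → X) (E : Set (X × X)) (x : ℕ → X) (y : X) (B : Set ℕ) : Prop :=
  ∀ i ∈ B, (f^[i] y, x i) ∈ E

/-- Topological shadowing. -/
def TopShadowing (f : X → X) : Prop :=
  ∀ E ∈ uniformity X, ∃ D ∈ uniformity X,
    ∀ x : ℕ → X, PseudoOrbitOn f D x Set.univ → ∃ y : X, TracedOn f E x y Set.univ

/-- Topological `(F, G)`-shadowing for families `F`, `G` of subsets of `ℕ`. -/
def FGShadowing (f : X → X) (F G : Set (Set ℕ)) : Prop :=
  ∀ E ∈ uniformity X, ∃ D ∈ uniformity X,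
    ∀ x : ℕ → X, (∃ A ∈ F, PseudoOrbitOn f D x A) →
      ∃ y : X, ∃ B ∈ G, TracedOn f E x y B

end Defs

/-- A set `A ⊆ ℕ` is syndetic: gaps are bounded. -/
def Syndetic (A : Set ℕ) : Prop :=
  ∃ M : ℕ, ∀ k : ℕ, ∃ j ∈ A, k ≤ j ∧ j ≤ k + M

/-- A set `A ⊆ ℕ` is thick: contains arbitrarily long blocks of consecutive numbers. -/
def Thick (A : Set ℕ) : Prop :=
  ∀ n : ℕ, ∃ k : ℕ, ∀ i < n, k + i ∈ A

/-- A set `A ⊆ ℕ` is thickly syndetic. -/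
def ThicklySyndetic (A : Set ℕ) : Prop :=
  ∀ n : ℕ, Syndetic {k : ℕ | ∀ i < n, k + i ∈ A}

/-- A set `A ⊆ ℕ` is piecewise syndetic. -/
def PiecewiseSyndetic (A : Set ℕ) : Prop :=
  ∃ T S : Set ℕ, Thick T ∧ Syndetic S ∧ A = T ∩ S

/-- The family of thick subsets of `ℕ`. -/
def thickFamily : Set (Set ℕ) := {A | Thick A}

/-- The family of piecewise syndetic subsets of `ℕ`. -/
def psFamily : Set (Set ℕ) := {A | PiecewiseSyndetic A}

open scoped Classical in
/-- The lower density of a subset of `ℕ`. -/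
noncomputable def lowerDensity (A : Set ℕ) : ℝ :=
  Filter.atTop.liminf fun n : ℕ => ((Finset.range n).filter (· ∈ A)).card / (n : ℝ)

/-- The family of subsets of `ℕ` of lower density `1`. -/
noncomputable def densityOneFamily : Set (Set ℕ) := {A | lowerDensity A = 1}

section Dyn

variable {X : Type*} [UniformSpace X]

/-- `x` is a minimal point of `f`. -/
def MinimalPt (f : X → X) (x : X) : Prop :=
  ∀ U : Set X, IsOpen U → x ∈ U → Syndetic {n : ℕ | f^[n] x ∈ U}

/-- `(x, y)` is a syndetically proximal pair for `f`. -/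
def SyndProx (f : X → X) (x y : X) : Prop :=
  ∀ E ∈ uniformity X, Syndetic {n : ℕ | (f^[n] x, f^[n] y) ∈ E}

end Dyn

/-!
By compactness, a finite `V`-net bounds how long a pseudo-orbit can wander before two of its
points are `V`-close, so every long block of a pseudo-orbit contains a segment that closes up
into a `G`-cycle; hence on a thick subset of `T` every `x i` lies on a `G`-cycle. Again by
compactness, `CR f` is the decreasing limit of the closures of the sets of points lying on
`G`-cycles, so for `G` small such points are `W`-close to `CR f`. Moving each `x i` to a nearby
chain recurrent point `y i` costs little, by uniform continuity of `f`.
-/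

open scoped Uniformity SetRel

section Chains

variable {X : Type*} {f : X → X}

theorem DChain.mono {A B : Set (X × X)} (h : A ⊆ B) {x y : X} (hc : DChain f A x y) :
    DChain f B x y :=
  let ⟨n, hn, c, hc0, hcn, hstep⟩ := hc
  ⟨n, hn, c, hc0, hcn, fun i hi => h (hstep i hi)⟩

theorem DChain.rebase {A B : Set (X × X)} [SetRel.IsRefl B] {z p : X} (hz : DChain f A z z)
    (hfp : (f p, f z) ∈ B) (hp : (z, p) ∈ B) : DChain f (B ○ A ○ B) p p := by
  obtain ⟨n, hn, c, hc0, hcn, hstep⟩ := hz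
  refine ⟨n, hn, fun i => if i = 0 ∨ n ≤ i then p else c i, by simp, by simp, fun i hi => ?_⟩
  have hstart : (f (if i = 0 ∨ n ≤ i then p else c i), f (c i)) ∈ B := by
    by_cases h : i = 0
    · subst h
      simpa [hc0] using hfp
    · rw [if_neg (by omega)]
      exact SetRel.rfl B
  have hend : (c (i + 1), if i + 1 = 0 ∨ n ≤ i + 1 then p else c (i + 1)) ∈ B := by
    by_cases h : i + 1 = n
    · simpa [h, hcn] using hp
    · rw [if_neg (by omega)]
      exact SetRel.rfl B
  exact SetRel.prodMk_mem_comp (SetRel.prodMk_mem_comp hstart (hstep i hi)) hend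

theorem dChain_self_of_periodic {G : Set (X × X)} {c : ℕ → X} {m : ℕ} (hm : 0 < m)
    (hper : Periodic c m) (hc : PseudoOrbitOn f G c univ) (i : ℕ) : DChain f G (c i) (c i) :=
  ⟨m, hm, fun k => c (i + k), rfl, hper i, fun k _ => hc (i + k) trivial⟩

theorem dChain_self_of_segment {G : Set (X × X)} {x : ℕ → X} {j m : ℕ}
    (hstep : ∀ i < m, (f (x (j + i)), x (j + i + 1)) ∈ G) (hclose : (f (x (j + m)), x j) ∈ G)
    {p : ℕ} (hp : p ≤ m) : DChain f G (x (j + p)) (x (j + p)) := by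
  have hc : PseudoOrbitOn f G (fun i => x (j + i % (m + 1))) univ := by
    intro i _
    have hlt : i % (m + 1) < m + 1 := Nat.mod_lt _ (by omega)
    rcases Nat.lt_or_ge (i % (m + 1)) m with hi | hi
    · have : (i + 1) % (m + 1) = i % (m + 1) + 1 := by
        rw [Nat.add_mod, Nat.mod_eq_of_lt (show 1 < m + 1 by omega),
          Nat.mod_eq_of_lt (by omega)]
      simpa [this, add_assoc] using hstep _ hi
    · replace hi : i % (m + 1) = m := by omega
      simpa [hi, Nat.succ_mod_succ_eq_zero_iff.mpr hi] using hclose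
  simpa [Nat.mod_eq_of_lt (Nat.lt_succ_of_le hp)] using
    dChain_self_of_periodic m.succ_pos (fun i => by simp) hc p

end Chains

section ChainRecurrence

variable {X : Type*} [UniformSpace X] {f : X → X}

theorem mem_CR_of_forall_mem_closure (hf : UniformContinuous f) {p : X}
    (hp : ∀ V ∈ 𝓤 X, p ∈ closure {x | DChain f V x x}) : p ∈ CR f := by
  intro H hH
  obtain ⟨B, hB, _, hBH⟩ := comp_comp_symm_mem_uniformity_sets hH
  have := isRefl_of_mem_uniformity hB
  have hV : B ∩ Prod.map f f ⁻¹' B ∈ 𝓤 X := inter_mem hB (hf hB)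
  obtain ⟨q, ⟨hpq, hfpq⟩, hq⟩ := mem_closure_iff_nhds.mp (hp _ hV) _ (mem_nhds_left p hV)
  replace hfpq : (f p, f q) ∈ B := hfpq
  exact ((DChain.mono inter_subset_left hq).rebase hfpq (SetRel.symm B hpq)).mono hBH

theorem exists_forall_dChain_self_exists_mem_CR [CompactSpace X] (hf : UniformContinuous f)
    {W : Set (X × X)} (hW : W ∈ 𝓤 X) :
    ∃ G ∈ 𝓤 X, ∀ p, DChain f G p p → ∃ z ∈ CR f, (p, z) ∈ W := by
  set U := interior {p | ∃ z ∈ CR f, (p, z) ∈ W}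
  have hUW : U ⊆ {p | ∃ z ∈ CR f, (p, z) ∈ W} := interior_subset
  have hCRU : CR f ⊆ U := fun z hz => mem_interior_iff_mem_nhds.2 <|
    mem_of_superset (mem_nhds_right z hW) fun p hp => ⟨z, hz, hp⟩
  let t : {V // V ∈ 𝓤 X} → Set X := fun V => closure {p | DChain f V p p} \ U
  have ht : univ ∩ ⋂ V, t V = ∅ := by
    refine eq_empty_of_forall_notMem fun p ⟨_, hp⟩ => ?_
    rw [mem_iInter] at hp
    exact (hp ⟨univ, univ_mem⟩).2
      (hCRU (mem_CR_of_forall_mem_closure hf fun V hV => (hp ⟨V, hV⟩).1))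
  have hdir : Directed (· ⊇ ·) t := fun V₁ V₂ =>
    ⟨⟨V₁.1 ∩ V₂.1, inter_mem V₁.2 V₂.2⟩,
      sdiff_subset_sdiff_left (closure_mono fun _ hp => hp.mono inter_subset_left),
      sdiff_subset_sdiff_left (closure_mono fun _ hp => hp.mono inter_subset_right)⟩
  have : Nonempty {V // V ∈ 𝓤 X} := ⟨⟨univ, univ_mem⟩⟩
  obtain ⟨⟨G, hG⟩, hGU⟩ := isCompact_univ.elim_directed_family_closed t
    (fun _ => isClosed_closure.sdiff isOpen_interior) ht hdir
  refine ⟨G, hG, fun p hp => ?_⟩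
  by_contra hpW
  exact hGU.subset ⟨trivial, subset_closure hp, fun hpU => hpW (hUW hpU)⟩

theorem exists_bound_forall_exists_lt_mem [CompactSpace X] {V : Set (X × X)} (hV : V ∈ 𝓤 X) :
    ∃ N, ∀ u : ℕ → X, ∃ a b, a < b ∧ b ≤ N ∧ (u b, u a) ∈ V := by
  obtain ⟨W, hW, _, hWV⟩ := comp_symm_mem_uniformity_sets hV
  obtain ⟨s, hs, hcover⟩ := isCompact_univ.totallyBounded W hW
  refine ⟨hs.toFinset.card, fun u => ?_⟩
  have hcenter : ∀ a, ∃ z ∈ s, (u a, z) ∈ W := fun a => by simpa using hcover (mem_univ (u a))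
  choose z hzs huz using hcenter
  obtain ⟨a, ha, b, hb, hab, hz⟩ := Finset.exists_ne_map_eq_of_card_lt_of_maps_to
    (s := Finset.range (hs.toFinset.card + 1)) (by simp) fun a _ => hs.mem_toFinset.2 (hzs a)
  have hclose : ∀ a b, z a = z b → (u b, u a) ∈ V := fun a b h =>
    hWV ⟨z b, huz b, h ▸ SetRel.symm W (huz a)⟩
  rw [Finset.mem_range] at ha hb
  rcases hab.lt_or_gt with h | h
  · exact ⟨a, b, h, by omega, hclose a b hz⟩
  · exact ⟨b, a, h, by omega, hclose b a hz.symm⟩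

theorem Thick.setOf_mem_and_add_one_mem {A : Set ℕ} (hA : Thick A) :
    Thick {i | i ∈ A ∧ i + 1 ∈ A} := fun n =>
  let ⟨k, hk⟩ := hA (n + 1)
  ⟨k, fun i hi => ⟨hk i (by omega), hk (i + 1) (by omega)⟩⟩

theorem exists_thick_inter_setOf_dChain_self [CompactSpace X] {G : Set (X × X)}
    (hG : G ∈ 𝓤 X) :
    ∃ D ∈ 𝓤 X, ∀ T : Set ℕ, Thick T → ∀ x : ℕ → X, PseudoOrbitOn f D x T →
      Thick (T ∩ {i | DChain f G (x i) (x i)}) := by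
  obtain ⟨V, hV, hVG⟩ := comp_mem_uniformity_sets hG
  have := isRefl_of_mem_uniformity hV
  obtain ⟨N, hN⟩ := exists_bound_forall_exists_lt_mem hV
  refine ⟨V, hV, fun T hT x hx n => ?_⟩
  obtain ⟨k, hk⟩ := hT (N * (n + 1))
  obtain ⟨a, b, hab, hbN, hba⟩ := hN fun a => x (k + a * (n + 1))
  have hlen : a * (n + 1) + (n + 1) ≤ b * (n + 1) :=
    add_one_mul a (n + 1) ▸ Nat.mul_le_mul_right _ hab
  have hbN' : b * (n + 1) ≤ N * (n + 1) := Nat.mul_le_mul_right _ hbN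
  set j := k + a * (n + 1)
  set j' := k + b * (n + 1)
  have hT' : ∀ i, j ≤ i → i < j' → i ∈ T := fun i h₁ h₂ => by
    simpa [show k + (i - k) = i by omega] using hk (i - k) (by omega)
  have hcycle : ∀ i, j ≤ i → i < j' → DChain f G (x i) (x i) := by
    intro i h₁ h₂
    obtain ⟨p, rfl⟩ := Nat.exists_eq_add_of_le h₁
    refine dChain_self_of_segment (m := j' - 1 - j) (fun q hq => ?_) ?_ (by omega)
    · exact hVG (SetRel.left_subset_comp (hx _ (hT' _ (by omega) (by omega))))
    · have hlast := hx (j' - 1) (hT' _ (by omega) (by omega))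
      rw [show j' - 1 + 1 = j' by omega] at hlast
      rw [show j + (j' - 1 - j) = j' - 1 by omega]
      exact hVG ⟨_, hlast, hba⟩
  exact ⟨j, fun i hi => ⟨hT' _ (by omega) (by omega), hcycle _ (by omega) (by omega)⟩⟩

end ChainRecurrence

theorem pseudoOrbit_on_thick_approx_in_CR_general
    {X : Type*} [UniformSpace X] [CompactSpace X]
    (f : X → X) (hf : Continuous f) :
    ∀ E ∈ uniformity X, ∃ D ∈ uniformity X,
      ∀ T : Set ℕ, Thick T → ∀ x : ℕ → X, PseudoOrbitOn f D x T →
        ∃ T' : Set ℕ, T' ⊆ T ∧ Thick T' ∧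
          ∃ y : ℕ → X, (∀ i : ℕ, y i ∈ CR f) ∧ PseudoOrbitOn f E y T' ∧
            ∀ i ∈ T', (x i, y i) ∈ E := by
  intro E hE
  have huc := CompactSpace.uniformContinuous_of_continuous hf
  obtain ⟨E₁, hE₁, _, hE₁E⟩ := comp_comp_symm_mem_uniformity_sets hE
  have := isRefl_of_mem_uniformity hE₁
  have hE₁E' : E₁ ⊆ E := fun _ h => hE₁E (SetRel.left_subset_comp (SetRel.left_subset_comp h))
  set W := SetRel.symmetrize (E₁ ∩ Prod.map f f ⁻¹' E₁)
  have hW : W ∈ 𝓤 X := symmetrize_mem_uniformity (inter_mem hE₁ (huc hE₁))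
  obtain ⟨G, hG, hGCR⟩ := exists_forall_dChain_self_exists_mem_CR huc hW
  obtain ⟨D, hD, hDthick⟩ := exists_thick_inter_setOf_dChain_self (f := f) hG
  refine ⟨D ∩ E₁, inter_mem hD hE₁, fun T hT x hx => ?_⟩
  set A := T ∩ {i | DChain f G (x i) (x i)}
  have hA : Thick A := hDthick T hT x fun i hi => (hx i hi).1
  obtain ⟨i₀, hi₀⟩ : A.Nonempty := let ⟨k, hk⟩ := hA 1; ⟨k, hk 0 one_pos⟩
  classical
  -- redirecting indices outside `A` to `i₀` makes `y i ∈ CR f` hold for every `i`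
  let σ i := if i ∈ A then i else i₀
  have hσ : ∀ i, σ i ∈ A := fun i => by dsimp only [σ]; split_ifs <;> assumption
  choose y hyCR hyW using fun i => hGCR (x (σ i)) (hσ i).2
  have hxy : ∀ i ∈ A, (x i, y i) ∈ W := fun i hi => by simpa [σ, hi] using hyW i
  refine ⟨{i | i ∈ A ∧ i + 1 ∈ A}, fun i hi => hi.1.1, hA.setOf_mem_and_add_one_mem, y, hyCR,
    fun i ⟨hi, hi₁⟩ => hE₁E ⟨_, ⟨_, (hxy i hi).2.2, (hx i hi.1).2⟩, (hxy (i + 1) hi₁).1.1⟩,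
    fun i hi => hE₁E' (hxy i hi.1).1.1⟩

/-- D-pseudo orbits on thick sets are E-approximated on thick subsets by
E-pseudo orbits contained in CR(f). -/
theorem pseudoOrbit_on_thick_approx_in_CR
    {X : Type*} [UniformSpace X] [CompactSpace X]
    (f : X → X) (hf : Continuous f) (hsurj : Function.Surjective f) :
    ∀ E ∈ uniformity X, ∃ D ∈ uniformity X,
      ∀ T : Set ℕ, Thick T → ∀ x : ℕ → X, PseudoOrbitOn f D x T →
        ∃ T' : Set ℕ, T' ⊆ T ∧ Thick T' ∧
          ∃ y : ℕ → X, (∀ i : ℕ, y i ∈ CR f) ∧ PseudoOrbitOn f E y T' ∧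
            ∀ i ∈ T', (x i, y i) ∈ E :=
  pseudoOrbit_on_thick_approx_in_CR_general f hf
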